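/- arXiv:2311.09527 — 4 statements merged into one kernel-verified Lean document; each statement's English description precedes it below -/
import Mathlib

section
/- Assume MFCQ holds at every point of C. Consider, for x ∈ ℝⁿ, the KKT system in (ξ, u, v): ξ + F(x) + (∂g(x)/∂x)ᵀu + Hᵀv = 0; (∂g(x)/∂x)ξ + α g(x) ≤ 0; Hξ + α h(x) = 0; u ≥ 0; uᵀ((∂g(x)/∂x)ξ + α g(x)) = 0. Define Λ_α(x) = {(u, v) : ∃ ξ such that (ξ, u, v) solves this system}. Then there exists an open set X ⊇ C such that Λ_α(x) ≠ ∅ for all x ∈ X; and whenever (ξ, u, v) solves the system, ξ = 𝓖_α(x) (the projection of −F(x) onto T_C^(α)(x)) and (u, v) minimizes J(x, u, v) = (1/2)‖Σ_i u_i ∇g_i(x) + Σ_j v_j ∇h_j(x)‖² over K_{cbf,α}(x). -/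
open scoped RealInnerProductSpace BigOperators Topology
open Set Filter

noncomputable section

/-- The constraint set `C = {x | g(x) ≤ 0, Hx = c}`. -/
def constraintSet {n m k : ℕ} (g : Fin m → EuclideanSpace ℝ (Fin n) → ℝ)
    (H : Fin k → EuclideanSpace ℝ (Fin n)) (c : Fin k → ℝ) :
    Set (EuclideanSpace ℝ (Fin n)) :=
  {x | (∀ i, g i x ≤ 0) ∧ ∀ j, ⟪H j, x⟫ = c j}

/-- Mangasarian–Fromovitz constraint qualification at `x`. -/
def MFCQat {n m k : ℕ} (g : Fin m → EuclideanSpace ℝ (Fin n) → ℝ)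
    (H : Fin k → EuclideanSpace ℝ (Fin n)) (x : EuclideanSpace ℝ (Fin n)) : Prop :=
  LinearIndependent ℝ H ∧
    ∃ ξ : EuclideanSpace ℝ (Fin n),
      (∀ i, g i x = 0 → ⟪gradient (g i) x, ξ⟫ < 0) ∧ ∀ j, ⟪H j, ξ⟫ = 0

/-- Solution set of the variational inequality `VI(F, C)`. -/
def SOL {n : ℕ} (F : EuclideanSpace ℝ (Fin n) → EuclideanSpace ℝ (Fin n))
    (C : Set (EuclideanSpace ℝ (Fin n))) : Set (EuclideanSpace ℝ (Fin n)) :=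
  {xs | xs ∈ C ∧ ∀ x ∈ C, 0 ≤ ⟪x - xs, F xs⟫}

/-- Tangent cone of `C` at `x ∈ C` (valid parameterization under MFCQ). -/
def tangentC {n m k : ℕ} (g : Fin m → EuclideanSpace ℝ (Fin n) → ℝ)
    (H : Fin k → EuclideanSpace ℝ (Fin n)) (x : EuclideanSpace ℝ (Fin n)) :
    Set (EuclideanSpace ℝ (Fin n)) :=
  {ξ | (∀ j, ⟪H j, ξ⟫ = 0) ∧ ∀ i, g i x = 0 → ⟪gradient (g i) x, ξ⟫ ≤ 0}

/-- The α-restricted tangent set. -/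
def Talpha {n m k : ℕ} (g : Fin m → EuclideanSpace ℝ (Fin n) → ℝ)
    (H : Fin k → EuclideanSpace ℝ (Fin n)) (c : Fin k → ℝ) (α : ℝ)
    (x : EuclideanSpace ℝ (Fin n)) : Set (EuclideanSpace ℝ (Fin n)) :=
  {ξ | (∀ i, ⟪gradient (g i) x, ξ⟫ ≤ -α * g i x) ∧
       ∀ j, ⟪H j, ξ⟫ = -α * (⟪H j, x⟫ - c j)}

/-- Closed-loop control-affine vector field `𝓕(x,u,v)`. -/
def Fcl {n m k : ℕ} (F : EuclideanSpace ℝ (Fin n) → EuclideanSpace ℝ (Fin n))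
    (g : Fin m → EuclideanSpace ℝ (Fin n) → ℝ)
    (H : Fin k → EuclideanSpace ℝ (Fin n))
    (x : EuclideanSpace ℝ (Fin n)) (u : Fin m → ℝ) (v : Fin k → ℝ) :
    EuclideanSpace ℝ (Fin n) :=
  -F x - ∑ i, u i • gradient (g i) x - ∑ j, v j • H j

/-- `p` is the Euclidean projection of `y` onto `K`. -/
def IsProjOn {n : ℕ} (K : Set (EuclideanSpace ℝ (Fin n)))
    (y p : EuclideanSpace ℝ (Fin n)) : Prop :=
  p ∈ K ∧ ∀ z ∈ K, ‖p - y‖ ≤ ‖z - y‖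

/-- The CBF admissible input set `K_{cbf,α}(x)`. -/
def Kcbf {n m k : ℕ} (F : EuclideanSpace ℝ (Fin n) → EuclideanSpace ℝ (Fin n))
    (g : Fin m → EuclideanSpace ℝ (Fin n) → ℝ)
    (H : Fin k → EuclideanSpace ℝ (Fin n)) (c : Fin k → ℝ) (α : ℝ)
    (x : EuclideanSpace ℝ (Fin n)) : Set ((Fin m → ℝ) × (Fin k → ℝ)) :=
  {p | (∀ i, 0 ≤ p.1 i) ∧
    (∀ i, ⟪gradient (g i) x, Fcl F g H x p.1 p.2⟫ ≤ -α * g i x) ∧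
    ∀ j, ⟪H j, Fcl F g H x p.1 p.2⟫ = -α * (⟪H j, x⟫ - c j)}

/-- The objective `J(x,u,v) = ½‖Σᵢ uᵢ ∇gᵢ(x) + Σⱼ vⱼ ∇hⱼ(x)‖²`. -/
def Jcost {n m k : ℕ} (g : Fin m → EuclideanSpace ℝ (Fin n) → ℝ)
    (H : Fin k → EuclideanSpace ℝ (Fin n))
    (x : EuclideanSpace ℝ (Fin n)) (p : (Fin m → ℝ) × (Fin k → ℝ)) : ℝ :=
  (1/2) * ‖(∑ i, p.1 i • gradient (g i) x) + ∑ j, p.2 j • H j‖ ^ 2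


/-- The KKT system (17) characterizing the safe monotone flow at `x`. -/
def KKTproj {n m k : ℕ} (F : EuclideanSpace ℝ (Fin n) → EuclideanSpace ℝ (Fin n))
    (g : Fin m → EuclideanSpace ℝ (Fin n) → ℝ)
    (H : Fin k → EuclideanSpace ℝ (Fin n)) (c : Fin k → ℝ) (α : ℝ)
    (x ξ : EuclideanSpace ℝ (Fin n)) (u : Fin m → ℝ) (v : Fin k → ℝ) : Prop :=
  ξ + F x + (∑ i, u i • gradient (g i) x) + (∑ j, v j • H j) = 0 ∧
  (∀ i, ⟪gradient (g i) x, ξ⟫ + α * g i x ≤ 0) ∧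
  (∀ j, ⟪H j, ξ⟫ + α * (⟪H j, x⟫ - c j) = 0) ∧
  (∀ i, 0 ≤ u i) ∧
  (∑ i, u i * (⟪gradient (g i) x, ξ⟫ + α * g i x)) = 0


section Aux


variable {n : ℕ}

lemma proj_of_vi {K : Set (EuclideanSpace ℝ (Fin n))} {y p : EuclideanSpace ℝ (Fin n)}
    (hp : p ∈ K) (hvi : ∀ z ∈ K, 0 ≤ ⟪p - y, z - p⟫) :
    p ∈ K ∧ ∀ z ∈ K, ‖p - y‖ ≤ ‖z - y‖ := by
  refine ⟨hp, fun z hz => ?_⟩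
  have h1 : ‖z - y‖ ^ 2 = ‖p - y‖ ^ 2 + 2 * ⟪p - y, z - p⟫ + ‖z - p‖ ^ 2 := by
    have : z - y = (p - y) + (z - p) := by abel
    rw [this, norm_add_sq_real]
  have h2 : ‖p - y‖ ^ 2 ≤ ‖z - y‖ ^ 2 := by nlinarith [hvi z hz, sq_nonneg ‖z - p‖]
  have := Real.sqrt_le_sqrt h2
  · rwa [Real.sqrt_sq (norm_nonneg _), Real.sqrt_sq (norm_nonneg _)] at this

/-- The "any KKT solution is the projection + optimal multiplier" part, abstractly. -/
lemma part2_unused {n m k : ℕ}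
    (F : EuclideanSpace ℝ (Fin n) → EuclideanSpace ℝ (Fin n))
    (g : Fin m → EuclideanSpace ℝ (Fin n) → ℝ)
    (H : Fin k → EuclideanSpace ℝ (Fin n)) (c : Fin k → ℝ)
    (α : ℝ)
    (x ξ : EuclideanSpace ℝ (Fin n)) (u : Fin m → ℝ) (v : Fin k → ℝ)
    (hk1 : ξ + F x + (∑ i, u i • gradient (g i) x) + (∑ j, v j • H j) = 0)
    (hk2 : ∀ i, ⟪gradient (g i) x, ξ⟫ + α * g i x ≤ 0)
    (hk3 : ∀ j, ⟪H j, ξ⟫ + α * (⟪H j, x⟫ - c j) = 0)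
    (hk4 : ∀ i, 0 ≤ u i)
    (hk5 : (∑ i, u i * (⟪gradient (g i) x, ξ⟫ + α * g i x)) = 0) :
    True := trivial

set_option maxHeartbeats 800000 in
lemma part2' {n m k : ℕ}
    (F : EuclideanSpace ℝ (Fin n) → EuclideanSpace ℝ (Fin n))
    (g : Fin m → EuclideanSpace ℝ (Fin n) → ℝ)
    (H : Fin k → EuclideanSpace ℝ (Fin n)) (c : Fin k → ℝ)
    (α : ℝ)
    (x ξ : EuclideanSpace ℝ (Fin n)) (u : Fin m → ℝ) (v : Fin k → ℝ)
    (hk1 : ξ + F x + (∑ i, u i • gradient (g i) x) + (∑ j, v j • H j) = 0)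
    (hk2 : ∀ i, ⟪gradient (g i) x, ξ⟫ + α * g i x ≤ 0)
    (hk3 : ∀ j, ⟪H j, ξ⟫ + α * (⟪H j, x⟫ - c j) = 0)
    (hk4 : ∀ i, 0 ≤ u i)
    (hk5 : (∑ i, u i * (⟪gradient (g i) x, ξ⟫ + α * g i x)) = 0) :
    (ξ ∈ {ξ' : EuclideanSpace ℝ (Fin n) |
        (∀ i, ⟪gradient (g i) x, ξ'⟫ ≤ -α * g i x) ∧
        ∀ j, ⟪H j, ξ'⟫ = -α * (⟪H j, x⟫ - c j)} ∧
      ∀ z ∈ {ξ' : EuclideanSpace ℝ (Fin n) |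
        (∀ i, ⟪gradient (g i) x, ξ'⟫ ≤ -α * g i x) ∧
        ∀ j, ⟪H j, ξ'⟫ = -α * (⟪H j, x⟫ - c j)}, ‖ξ - (-F x)‖ ≤ ‖z - (-F x)‖) := by
  set a : Fin m → EuclideanSpace ℝ (Fin n) := fun i => gradient (g i) x with ha
  -- membership in Talpha
  have hmem : (∀ i, ⟪a i, ξ⟫ ≤ -α * g i x) ∧ ∀ j, ⟪H j, ξ⟫ = -α * (⟪H j, x⟫ - c j) := by
    constructor
    · intro i; have := hk2 i; linarith
    · intro j; have := hk3 j; linarith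
  -- each complementarity term vanishes
  have hterm : ∀ i, u i * (⟪a i, ξ⟫ + α * g i x) = 0 := by
    have hnp : ∀ i ∈ Finset.univ, u i * (⟪a i, ξ⟫ + α * g i x) ≤ 0 := fun i _ =>
      mul_nonpos_of_nonneg_of_nonpos (hk4 i) (hk2 i)
    intro i
    exact (Finset.sum_eq_zero_iff_of_nonpos hnp).mp hk5 i (Finset.mem_univ i)
  -- ξ = -F x - S1 - S2
  have hξ : ξ = -F x - (∑ i, u i • a i) - (∑ j, v j • H j) := by
    have h2 : ξ - (-F x - (∑ i, u i • a i) - (∑ j, v j • H j)) =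
        ξ + F x + (∑ i, u i • a i) + (∑ j, v j • H j) := by abel
    exact sub_eq_zero.mp (h2.trans hk1)
  refine proj_of_vi hmem ?_
  intro z hz
  have hzi := hz.1
  have hze := hz.2
  have hsub : ξ - (-F x) = -((∑ i, u i • a i) + (∑ j, v j • H j)) := by
    rw [hξ]; abel
  rw [hsub]
  have hinner : ⟪(∑ i, u i • a i) + (∑ j, v j • H j), z - ξ⟫ =
      (∑ i, u i * ⟪a i, z - ξ⟫) + (∑ j, v j * ⟪H j, z - ξ⟫) := by
    simp [inner_add_left, sum_inner, real_inner_smul_left, Finset.mul_sum, mul_assoc]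
  have h1 : ∀ i, u i * ⟪a i, z - ξ⟫ ≤ 0 := by
    intro i
    have e1 : ⟪a i, z - ξ⟫ = ⟪a i, z⟫ - ⟪a i, ξ⟫ := by rw [inner_sub_right]
    have h2 : u i * ⟪a i, z⟫ ≤ u i * (-α * g i x) :=
      mul_le_mul_of_nonneg_left (hzi i) (hk4 i)
    have h3 := hterm i
    rw [e1]
    nlinarith [h2, h3]
  have h2 : ∀ j, ⟪H j, z - ξ⟫ = 0 := by
    intro j
    rw [inner_sub_right, hze j, hmem.2 j]; ring
  rw [inner_neg_left, hinner]
  have : (∑ i, u i * ⟪a i, z - ξ⟫) + (∑ j, v j * ⟪H j, z - ξ⟫) ≤ 0 := by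
    have s1 : (∑ i, u i * ⟪a i, z - ξ⟫) ≤ 0 :=
      Finset.sum_nonpos (fun i _ => h1 i)
    have s2 : (∑ j, v j * ⟪H j, z - ξ⟫) = 0 :=
      Finset.sum_eq_zero (fun j _ => by rw [h2 j, mul_zero])
    linarith
  linarith



lemma sum_update_smul {m : ℕ} {G : Type*} [AddCommGroup G] [Module ℝ G]
    (u : Fin m → ℝ) (i : Fin m) (c : ℝ) (h : Fin m → G) :
    (∑ i', (Function.update u i c) i' • h i') = (∑ i', u i' • h i') + (c - u i) • h i := by
  have key : ∀ i', (Function.update u i c) i' • h i' =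
      u i' • h i' + (if i' = i then (c - u i) • h i else 0) := by
    intro i'
    by_cases hii : i' = i
    · subst hii
      rw [if_pos rfl, Function.update_self, sub_smul]
      abel
    · simp [Function.update_of_ne hii, hii]
  rw [Finset.sum_congr rfl (fun i' _ => key i'), Finset.sum_add_distrib,
    Finset.sum_ite_eq' Finset.univ i (fun _ => (c - u i) • h i)]
  simp

/-- The combination map. -/
def wfun {n m k : ℕ} (a : Fin m → EuclideanSpace ℝ (Fin n))
    (H : Fin k → EuclideanSpace ℝ (Fin n)) (p : (Fin m → ℝ) × (Fin k → ℝ)) :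
    EuclideanSpace ℝ (Fin n) :=
  (∑ i, p.1 i • a i) + ∑ j, p.2 j • H j

/-- The dual objective. -/
def qfun {n m k : ℕ} (a : Fin m → EuclideanSpace ℝ (Fin n)) (b : Fin m → ℝ)
    (H : Fin k → EuclideanSpace ℝ (Fin n)) (d : Fin k → ℝ)
    (y : EuclideanSpace ℝ (Fin n)) (p : (Fin m → ℝ) × (Fin k → ℝ)) : ℝ :=
  ⟪wfun a H p, y⟫ - (1/2) * ⟪wfun a H p, wfun a H p⟫
    - (∑ i, p.1 i * b i) - (∑ j, p.2 j * d j)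

variable {n m k : ℕ} (a : Fin m → EuclideanSpace ℝ (Fin n)) (b : Fin m → ℝ)
  (H : Fin k → EuclideanSpace ℝ (Fin n)) (d : Fin k → ℝ)
  (y : EuclideanSpace ℝ (Fin n))

lemma inner_wfun (p : (Fin m → ℝ) × (Fin k → ℝ)) (z : EuclideanSpace ℝ (Fin n)) :
    ⟪wfun a H p, z⟫ = (∑ i, p.1 i * ⟪a i, z⟫) + ∑ j, p.2 j * ⟪H j, z⟫ := by
  simp [wfun, inner_add_left, sum_inner, real_inner_smul_left, Finset.mul_sum, mul_assoc]

lemma wfun_update_u (p : (Fin m → ℝ) × (Fin k → ℝ)) (i : Fin m) (t : ℝ) :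
    wfun a H (Function.update p.1 i (p.1 i + t), p.2) = wfun a H p + t • a i := by
  simp only [wfun]
  rw [sum_update_smul p.1 i (p.1 i + t) a, add_sub_cancel_left]
  abel

lemma wfun_update_v (p : (Fin m → ℝ) × (Fin k → ℝ)) (j : Fin k) (t : ℝ) :
    wfun a H (p.1, Function.update p.2 j (p.2 j + t)) = wfun a H p + t • H j := by
  simp only [wfun]
  rw [sum_update_smul p.2 j (p.2 j + t) H, add_sub_cancel_left]
  abel

lemma qfun_update_u (p : (Fin m → ℝ) × (Fin k → ℝ)) (i : Fin m) (t : ℝ) :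
    qfun a b H d y (Function.update p.1 i (p.1 i + t), p.2) =
      qfun a b H d y p + t * (⟪a i, y - wfun a H p⟫ - b i)
        - t^2/2 * ⟪a i, a i⟫ := by
  have hb' : (∑ i', (Function.update p.1 i (p.1 i + t)) i' * b i')
      = (∑ i', p.1 i' * b i') + t * b i := by
    have := sum_update_smul p.1 i (p.1 i + t) b
    simpa [smul_eq_mul] using this
  simp only [qfun, wfun_update_u]
  rw [hb']
  have e1 : ⟪wfun a H p + t • a i, y⟫ = ⟪wfun a H p, y⟫ + t * ⟪a i, y⟫ := by
    rw [inner_add_left, real_inner_smul_left]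
  have e2 : ⟪wfun a H p + t • a i, wfun a H p + t • a i⟫
      = ⟪wfun a H p, wfun a H p⟫ + 2 * (t * ⟪a i, wfun a H p⟫)
        + t * (t * ⟪a i, a i⟫) := by
    rw [real_inner_add_add_self, real_inner_smul_right, real_inner_smul_left,
      real_inner_smul_right, real_inner_comm (wfun a H p) (a i)]
  have e3 : ⟪a i, y - wfun a H p⟫ = ⟪a i, y⟫ - ⟪a i, wfun a H p⟫ :=
    inner_sub_right _ _ _
  rw [e1, e2, e3]
  ring

lemma qfun_update_v (p : (Fin m → ℝ) × (Fin k → ℝ)) (j : Fin k) (t : ℝ) :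
    qfun a b H d y (p.1, Function.update p.2 j (p.2 j + t)) =
      qfun a b H d y p + t * (⟪H j, y - wfun a H p⟫ - d j)
        - t^2/2 * ⟪H j, H j⟫ := by
  have hd' : (∑ j', (Function.update p.2 j (p.2 j + t)) j' * d j')
      = (∑ j', p.2 j' * d j') + t * d j := by
    have := sum_update_smul p.2 j (p.2 j + t) d
    simpa [smul_eq_mul] using this
  simp only [qfun, wfun_update_v]
  rw [hd']
  have e1 : ⟪wfun a H p + t • H j, y⟫ = ⟪wfun a H p, y⟫ + t * ⟪H j, y⟫ := by
    rw [inner_add_left, real_inner_smul_left]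
  have e2 : ⟪wfun a H p + t • H j, wfun a H p + t • H j⟫
      = ⟪wfun a H p, wfun a H p⟫ + 2 * (t * ⟪H j, wfun a H p⟫)
        + t * (t * ⟪H j, H j⟫) := by
    rw [real_inner_add_add_self, real_inner_smul_right, real_inner_smul_left,
      real_inner_smul_right, real_inner_comm (wfun a H p) (H j)]
  have e3 : ⟪H j, y - wfun a H p⟫ = ⟪H j, y⟫ - ⟪H j, wfun a H p⟫ :=
    inner_sub_right _ _ _
  rw [e1, e2, e3]
  ring

lemma qfun_zero : qfun a b H d y (0, 0) = 0 := by
  simp [qfun, wfun]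

lemma qfun_continuous : Continuous (qfun a b H d y) := by
  have hw : Continuous (wfun a H) := by
    apply Continuous.add
    · exact continuous_finset_sum _ (fun i _ =>
        (((continuous_apply i).comp continuous_fst).smul continuous_const))
    · exact continuous_finset_sum _ (fun j _ =>
        (((continuous_apply j).comp continuous_snd).smul continuous_const))
  apply Continuous.sub
  apply Continuous.sub
  apply Continuous.sub
  · exact hw.inner continuous_const
  · exact continuous_const.mul (hw.inner hw)
  · exact continuous_finset_sum _ (fun i _ =>
      ((continuous_apply i).comp continuous_fst).mul continuous_const)
  · exact continuous_finset_sum _ (fun j _ =>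
      ((continuous_apply j).comp continuous_snd).mul continuous_const)

lemma qfun_slater_bound (ξh : EuclideanSpace ℝ (Fin n))
    (p : (Fin m → ℝ) × (Fin k → ℝ)) :
    qfun a b H d y p ≤ (1/2) * ⟪ξh - y, ξh - y⟫
      + (∑ i, p.1 i * (⟪a i, ξh⟫ - b i)) + ∑ j, p.2 j * (⟪H j, ξh⟫ - d j) := by
  have hw := inner_wfun a H p ξh
  have hpos : (0:ℝ) ≤ ⟪ξh - y + wfun a H p, ξh - y + wfun a H p⟫ := real_inner_self_nonneg
  have e1 := real_inner_add_add_self (ξh - y) (wfun a H p)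
  have e2 : ⟪ξh - y, wfun a H p⟫ = ⟪wfun a H p, ξh⟫ - ⟪wfun a H p, y⟫ := by
    rw [inner_sub_left, real_inner_comm ξh, real_inner_comm y]
  have e3 : ∑ i, p.1 i * (⟪a i, ξh⟫ - b i)
      = (∑ i, p.1 i * ⟪a i, ξh⟫) - ∑ i, p.1 i * b i := by
    rw [← Finset.sum_sub_distrib]; exact Finset.sum_congr rfl (fun i _ => by ring)
  have e4 : ∑ j, p.2 j * (⟪H j, ξh⟫ - d j)
      = (∑ j, p.2 j * ⟪H j, ξh⟫) - ∑ j, p.2 j * d j := by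
    rw [← Finset.sum_sub_distrib]; exact Finset.sum_congr rfl (fun j _ => by ring)
  simp only [qfun]
  rw [e3, e4]
  nlinarith [hpos, e1, e2, hw]

lemma exists_antilip (hH : LinearIndependent ℝ H) :
    ∃ cH : ℝ, 0 ≤ cH ∧ ∀ v : Fin k → ℝ, ‖v‖ ≤ cH * ‖∑ j, v j • H j‖ := by
  classical
  let T : (Fin k → ℝ) →ₗ[ℝ] EuclideanSpace ℝ (Fin n) :=
    { toFun := fun v => ∑ j, v j • H j
      map_add' := by intro v1 v2; simp [add_smul, Finset.sum_add_distrib]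
      map_smul' := by intro r v; simp [smul_smul, Finset.smul_sum]
    }
  have hinj : Function.Injective T := by
    intro v1 v2 hvv
    have h0 : ∑ j, (v1 - v2) j • H j = 0 := by
      have : T (v1 - v2) = 0 := by rw [map_sub, hvv, sub_self]
      simpa [T] using this
    have hz := Fintype.linearIndependent_iff.mp hH (v1 - v2) h0
    funext j
    have := hz j
    simp only [Pi.sub_apply] at this
    linarith
  let eL := LinearEquiv.ofInjective T hinj
  let S : ↥(LinearMap.range T) →L[ℝ] (Fin k → ℝ) :=
    LinearMap.toContinuousLinearMap eL.symm.toLinearMap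
  refine ⟨‖S‖, S.opNorm_nonneg, fun v => ?_⟩
  have h1 : S (eL v) = v := by
    simp [S, eL]
  have h2 : ‖(eL v : EuclideanSpace ℝ (Fin n))‖ = ‖∑ j, v j • H j‖ := by
    congr 1
  calc ‖v‖ = ‖S (eL v)‖ := by rw [h1]
    _ ≤ ‖S‖ * ‖eL v‖ := S.le_opNorm _
    _ = ‖S‖ * ‖∑ j, v j • H j‖ := by rw [← h2]; rfl

set_option maxHeartbeats 1000000 in
lemma kkt_exists (hH : LinearIndependent ℝ H) (ξh : EuclideanSpace ℝ (Fin n))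
    (hs : ∀ i, ⟪a i, ξh⟫ < b i) (he : ∀ j, ⟪H j, ξh⟫ = d j) :
    ∃ (ξ : EuclideanSpace ℝ (Fin n)) (u : Fin m → ℝ) (v : Fin k → ℝ),
      ξ + (∑ i, u i • a i) + (∑ j, v j • H j) = y ∧
      (∀ i, ⟪a i, ξ⟫ ≤ b i) ∧ (∀ j, ⟪H j, ξ⟫ = d j) ∧
      (∀ i, 0 ≤ u i) ∧ (∀ i, u i * (⟪a i, ξ⟫ - b i) = 0) := by
  classical
  obtain ⟨cH, hcH0, hcH⟩ := exists_antilip H hH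
  set M : ℝ := (1/2) * ⟪ξh - y, ξh - y⟫ with hM_def
  have hM : 0 ≤ M := by
    have : (0:ℝ) ≤ ⟪ξh - y, ξh - y⟫ := real_inner_self_nonneg
    rw [hM_def]; linarith
  have hεpos : ∀ i : Fin m, 0 < b i - ⟪a i, ξh⟫ := fun i => sub_pos.mpr (hs i)
  set U : ℝ := ∑ i, M / (b i - ⟪a i, ξh⟫) with hU_def
  have hU0 : 0 ≤ U := Finset.sum_nonneg fun i _ => div_nonneg hM (hεpos i).le
  set A1 : ℝ := U * ∑ i, ‖a i‖ with hA1_def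
  have hA10 : 0 ≤ A1 := mul_nonneg hU0 (Finset.sum_nonneg fun i _ => norm_nonneg _)
  set B1 : ℝ := U * ∑ i, |b i| with hB1_def
  have hB10 : 0 ≤ B1 := mul_nonneg hU0 (Finset.sum_nonneg fun i _ => abs_nonneg _)
  set D1 : ℝ := ∑ j, |d j| with hD1_def
  have hD10 : 0 ≤ D1 := Finset.sum_nonneg fun j _ => abs_nonneg _
  set P : ℝ := ‖y‖ + cH * D1 with hP_def
  have hP0 : 0 ≤ P := add_nonneg (norm_nonneg _) (mul_nonneg hcH0 hD10)
  set Q : ℝ := B1 + cH * A1 * D1 with hQ_def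
  have hQ0 : 0 ≤ Q := add_nonneg hB10 (mul_nonneg (mul_nonneg hcH0 hA10) hD10)
  set Rw : ℝ := P + Real.sqrt (P^2 + 2*Q) with hRw_def
  set Rv : ℝ := cH * (Rw + A1) with hRv_def
  set R : ℝ := max U Rv with hR_def
  -- any admissible point with nonnegative objective lies in the ball of radius R
  have hbound : ∀ p : (Fin m → ℝ) × (Fin k → ℝ), (∀ i, 0 ≤ p.1 i) →
      0 ≤ qfun a b H d y p → ‖p‖ ≤ R := by
    intro p hp1 hqp
    have hsum0 : ∑ j, p.2 j * (⟪H j, ξh⟫ - d j) = 0 :=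
      Finset.sum_eq_zero fun j _ => by rw [he j, sub_self, mul_zero]
    have hkey := qfun_slater_bound a b H d y ξh p
    rw [hsum0, add_zero] at hkey
    have hsum_le : ∑ i, p.1 i * (b i - ⟪a i, ξh⟫) ≤ M := by
      have hcanc : ∑ i, p.1 i * (b i - ⟪a i, ξh⟫) + ∑ i, p.1 i * (⟪a i, ξh⟫ - b i) = 0 := by
        rw [← Finset.sum_add_distrib]
        exact Finset.sum_eq_zero fun i _ => by ring
      have hq0 : 0 ≤ qfun a b H d y p := hqp
      have hMe := hM_def
      linarith
    have hcoord : ∀ i, p.1 i ≤ M / (b i - ⟪a i, ξh⟫) := by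
      intro i
      rw [le_div_iff₀ (hεpos i)]
      calc p.1 i * (b i - ⟪a i, ξh⟫)
          ≤ ∑ i', p.1 i' * (b i' - ⟪a i', ξh⟫) :=
            Finset.single_le_sum (f := fun i' => p.1 i' * (b i' - ⟪a i', ξh⟫))
              (fun i' _ => mul_nonneg (hp1 i') (hεpos i').le) (Finset.mem_univ i)
        _ ≤ M := hsum_le
    have hu_le : ∀ i, p.1 i ≤ U := by
      intro i
      refine (hcoord i).trans ?_
      rw [hU_def]
      exact Finset.single_le_sum (f := fun i' => M / (b i' - ⟪a i', ξh⟫))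
        (fun i' _ => div_nonneg hM (hεpos i').le) (Finset.mem_univ i)
    have hS1 : ‖∑ i, p.1 i • a i‖ ≤ A1 := by
      calc ‖∑ i, p.1 i • a i‖ ≤ ∑ i, ‖p.1 i • a i‖ := norm_sum_le _ _
        _ = ∑ i, p.1 i * ‖a i‖ := Finset.sum_congr rfl fun i _ => by
              rw [norm_smul, Real.norm_eq_abs, abs_of_nonneg (hp1 i)]
        _ ≤ ∑ i, U * ‖a i‖ := Finset.sum_le_sum fun i _ =>
              mul_le_mul_of_nonneg_right (hu_le i) (norm_nonneg _)
        _ = A1 := by rw [hA1_def, Finset.mul_sum]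
    have hSb : |∑ i, p.1 i * b i| ≤ B1 := by
      calc |∑ i, p.1 i * b i| ≤ ∑ i, |p.1 i * b i| := Finset.abs_sum_le_sum_abs _ _
        _ ≤ ∑ i, U * |b i| := Finset.sum_le_sum fun i _ => by
              rw [abs_mul, abs_of_nonneg (hp1 i)]
              exact mul_le_mul_of_nonneg_right (hu_le i) (abs_nonneg _)
        _ = B1 := by rw [hB1_def, Finset.mul_sum]
    have hSd : |∑ j, p.2 j * d j| ≤ ‖p.2‖ * D1 := by
      calc |∑ j, p.2 j * d j| ≤ ∑ j, |p.2 j * d j| := Finset.abs_sum_le_sum_abs _ _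
        _ ≤ ∑ j, ‖p.2‖ * |d j| := Finset.sum_le_sum fun j _ => by
              rw [abs_mul]
              refine mul_le_mul_of_nonneg_right ?_ (abs_nonneg _)
              rw [← Real.norm_eq_abs]
              exact norm_le_pi_norm p.2 j
        _ = ‖p.2‖ * D1 := by rw [hD1_def, Finset.mul_sum]
    have hS2 : ‖∑ j, p.2 j • H j‖ ≤ ‖wfun a H p‖ + A1 := by
      have hrw : ∑ j, p.2 j • H j = wfun a H p - ∑ i, p.1 i • a i := by
        simp only [wfun]; abel
      rw [hrw]
      calc ‖wfun a H p - ∑ i, p.1 i • a i‖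
          ≤ ‖wfun a H p‖ + ‖∑ i, p.1 i • a i‖ := norm_sub_le _ _
        _ ≤ ‖wfun a H p‖ + A1 := by linarith
    have hv2 : ‖p.2‖ ≤ cH * (‖wfun a H p‖ + A1) := by
      calc ‖p.2‖ ≤ cH * ‖∑ j, p.2 j • H j‖ := hcH p.2
        _ ≤ cH * (‖wfun a H p‖ + A1) := mul_le_mul_of_nonneg_left hS2 hcH0
    have hqp' : (1/2) * ‖wfun a H p‖^2 ≤ ‖wfun a H p‖ * P + Q := by
      have h1 : ⟪wfun a H p, wfun a H p⟫ = ‖wfun a H p‖^2 := real_inner_self_eq_norm_sq _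
      have h2 : ⟪wfun a H p, y⟫ ≤ ‖wfun a H p‖ * ‖y‖ := real_inner_le_norm _ _
      have h3 := hqp
      simp only [qfun] at h3
      have h4 := (abs_le.mp hSd).1
      have h5 := (abs_le.mp hSb).1
      have h6 : ‖p.2‖ * D1 ≤ cH * (‖wfun a H p‖ + A1) * D1 :=
        mul_le_mul_of_nonneg_right hv2 hD10
      rw [hP_def, hQ_def]
      nlinarith [h1, h2, h3, h4, h5, h6]
    have hw_le : ‖wfun a H p‖ ≤ Rw := by
      rcases le_or_gt (‖wfun a H p‖) P with hcase | hcase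
      · have hsq : 0 ≤ Real.sqrt (P^2 + 2*Q) := Real.sqrt_nonneg _
        rw [hRw_def]; linarith
      · have h2 : (‖wfun a H p‖ - P)^2 ≤ P^2 + 2*Q := by nlinarith [hqp']
        have h3 : ‖wfun a H p‖ - P ≤ Real.sqrt (P^2 + 2*Q) := by
          rw [← Real.sqrt_sq (by linarith : (0:ℝ) ≤ ‖wfun a H p‖ - P)]
          exact Real.sqrt_le_sqrt h2
        rw [hRw_def]; linarith
    have hv_le : ‖p.2‖ ≤ Rv := by
      rw [hRv_def]
      calc ‖p.2‖ ≤ cH * (‖wfun a H p‖ + A1) := hv2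
        _ ≤ cH * (Rw + A1) := mul_le_mul_of_nonneg_left (by linarith) hcH0
    have hu_norm : ‖p.1‖ ≤ U := by
      rw [pi_norm_le_iff_of_nonneg hU0]
      intro i
      rw [Real.norm_eq_abs, abs_of_nonneg (hp1 i)]
      exact hu_le i
    calc ‖p‖ = max ‖p.1‖ ‖p.2‖ := rfl
      _ ≤ max U Rv := max_le_max hu_norm hv_le
      _ = R := by rw [hR_def]
  -- maximize the dual objective over the compact admissible set
  set K : Set ((Fin m → ℝ) × (Fin k → ℝ)) :=
    Metric.closedBall 0 R ∩ {p | ∀ i, 0 ≤ p.1 i} with hK_def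
  have hR0 : 0 ≤ R := le_trans hU0 (le_max_left _ _)
  have h0K : (0 : (Fin m → ℝ) × (Fin k → ℝ)) ∈ K :=
    ⟨Metric.mem_closedBall_self hR0, fun i => le_rfl⟩
  have hKcompact : IsCompact K := by
    apply (isCompact_closedBall (0 : (Fin m → ℝ) × (Fin k → ℝ)) R).inter_right
    have hKeq : {p : (Fin m → ℝ) × (Fin k → ℝ) | ∀ i, 0 ≤ p.1 i}
        = ⋂ i, {p : (Fin m → ℝ) × (Fin k → ℝ) | 0 ≤ p.1 i} := by
      ext p; simp
    rw [hKeq]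
    exact isClosed_iInter fun i =>
      isClosed_le continuous_const ((continuous_apply i).comp continuous_fst)
  obtain ⟨ps, hpsK, hps_max⟩ := hKcompact.exists_isMaxOn ⟨0, h0K⟩
    ((qfun_continuous a b H d y).continuousOn)
  have hpsu : ∀ i, 0 ≤ ps.1 i := hpsK.2
  have h0q : qfun a b H d y 0 = 0 := qfun_zero a b H d y
  have hglob : ∀ p : (Fin m → ℝ) × (Fin k → ℝ), (∀ i, 0 ≤ p.1 i) →
      qfun a b H d y p ≤ qfun a b H d y ps := by
    intro p hp1
    rcases le_or_gt (qfun a b H d y p) 0 with hc | hc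
    · calc qfun a b H d y p ≤ 0 := hc
        _ = qfun a b H d y 0 := h0q.symm
        _ ≤ qfun a b H d y ps := hps_max h0K
    · exact hps_max ⟨mem_closedBall_zero_iff.mpr (hbound p hp1 hc.le), hp1⟩
  set ξ : EuclideanSpace ℝ (Fin n) := y - wfun a H ps with hξ_def
  -- inequality multipliers: first-order conditions
  have hDle : ∀ i, ⟪a i, ξ⟫ - b i ≤ 0 := by
    intro i
    by_contra hcon
    push_neg at hcon
    have hA : (0:ℝ) ≤ ⟪a i, a i⟫ := real_inner_self_nonneg
    have hA1 : (0:ℝ) < ⟪a i, a i⟫ + 1 := by linarith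
    set t : ℝ := (⟪a i, ξ⟫ - b i) / (⟪a i, a i⟫ + 1) with ht_def
    have ht : 0 < t := div_pos hcon hA1
    have hmem : ∀ i', 0 ≤ (Function.update ps.1 i (ps.1 i + t)) i' := by
      intro i'
      by_cases hii : i' = i
      · subst hii; rw [Function.update_self]; have := hpsu i'; linarith
      · rw [Function.update_of_ne hii]; exact hpsu i'
    have hle := hglob (Function.update ps.1 i (ps.1 i + t), ps.2) hmem
    rw [qfun_update_u, ← hξ_def] at hle
    have hle' : t * (⟪a i, ξ⟫ - b i) - t^2/2 * ⟪a i, a i⟫ ≤ 0 := by linarith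
    have hident : t * (⟪a i, a i⟫ + 1) = ⟪a i, ξ⟫ - b i :=
      div_mul_cancel₀ _ (ne_of_gt hA1)
    have h6 : t * (t * (⟪a i, a i⟫ + 1)) = t * (⟪a i, ξ⟫ - b i) := by rw [hident]
    nlinarith [h6, hle', mul_pos ht ht, mul_nonneg hA (sq_nonneg t)]
  -- complementary slackness
  have hcompl : ∀ i, ps.1 i * (⟪a i, ξ⟫ - b i) = 0 := by
    intro i
    rcases (hpsu i).eq_or_lt with h0 | hpos
    · rw [← h0, zero_mul]
    · have hA : (0:ℝ) ≤ ⟪a i, a i⟫ := real_inner_self_nonneg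
      have hA1 : (0:ℝ) < ⟪a i, a i⟫ + 1 := by linarith
      have hD0 : ⟪a i, ξ⟫ - b i = 0 := by
        rcases eq_or_lt_of_le (hDle i) with h | h
        · exact h
        · exfalso
          set t : ℝ := max (-(ps.1 i)) ((⟪a i, ξ⟫ - b i) / (⟪a i, a i⟫ + 1)) with ht_def
          have htneg : t < 0 := max_lt (by linarith) (div_neg_of_neg_of_pos h hA1)
          have htge : -(ps.1 i) ≤ t := le_max_left _ _
          have hmem : ∀ i', 0 ≤ (Function.update ps.1 i (ps.1 i + t)) i' := by
            intro i'
            by_cases hii : i' = i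
            · subst hii; rw [Function.update_self]; linarith
            · rw [Function.update_of_ne hii]; exact hpsu i'
          have hle := hglob (Function.update ps.1 i (ps.1 i + t), ps.2) hmem
          rw [qfun_update_u, ← hξ_def] at hle
          have hle' : t * (⟪a i, ξ⟫ - b i) - t^2/2 * ⟪a i, a i⟫ ≤ 0 := by linarith
          have hDt : ⟪a i, ξ⟫ - b i ≤ t * (⟪a i, a i⟫ + 1) := by
            have hmax := le_max_right (-(ps.1 i)) ((⟪a i, ξ⟫ - b i) / (⟪a i, a i⟫ + 1))
            rw [← ht_def] at hmax
            rw [div_le_iff₀ hA1] at hmax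
            linarith
          have h6 : t * (t * (⟪a i, a i⟫ + 1)) ≤ t * (⟪a i, ξ⟫ - b i) :=
            mul_le_mul_of_nonpos_left hDt htneg.le
          nlinarith [h6, hle', mul_pos_of_neg_of_neg htneg htneg,
            mul_nonneg hA (sq_nonneg t)]
      rw [hD0, mul_zero]
  -- equality multipliers: stationarity
  have hE0 : ∀ j, ⟪H j, ξ⟫ - d j = 0 := by
    intro j
    have hB : (0:ℝ) ≤ ⟪H j, H j⟫ := real_inner_self_nonneg
    have hB1 : (0:ℝ) < ⟪H j, H j⟫ + 1 := by linarith
    set t : ℝ := (⟪H j, ξ⟫ - d j) / (⟪H j, H j⟫ + 1) with ht_def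
    have hle := hglob (ps.1, Function.update ps.2 j (ps.2 j + t)) (fun i' => hpsu i')
    rw [qfun_update_v, ← hξ_def] at hle
    have hle' : t * (⟪H j, ξ⟫ - d j) - t^2/2 * ⟪H j, H j⟫ ≤ 0 := by linarith
    have hident : t * (⟪H j, H j⟫ + 1) = ⟪H j, ξ⟫ - d j :=
      div_mul_cancel₀ _ (ne_of_gt hB1)
    have h7 : t * (t * (⟪H j, H j⟫ + 1)) = t * (⟪H j, ξ⟫ - d j) := by rw [hident]
    have ht0 : t = 0 := by
      by_contra htne
      have ht2 : 0 < t^2 := by positivity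
      nlinarith [hle', h7, mul_nonneg hB (sq_nonneg t), ht2]
    rw [← hident, ht0, zero_mul]
  refine ⟨ξ, ps.1, ps.2, ?_, ?_, ?_, hpsu, hcompl⟩
  · rw [hξ_def]; simp only [wfun]; abel
  · intro i; have := hDle i; linarith
  · intro j; have := hE0 j; linarith

lemma slater_scale (x : EuclideanSpace ℝ (Fin n)) (gx : Fin m → ℝ) (α : ℝ) (hα : 0 < α)
    (hgx : ∀ i, gx i ≤ 0) (ξ : EuclideanSpace ℝ (Fin n))
    (hstrict : ∀ i, gx i = 0 → ⟪a i, ξ⟫ < 0) (horth : ∀ j, ⟪H j, ξ⟫ = 0) :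
    ∃ ξs : EuclideanSpace ℝ (Fin n),
      (∀ i, ⟪a i, ξs⟫ < -α * gx i) ∧ ∀ j, ⟪H j, ξs⟫ = 0 := by
  have hev : ∀ i, ∀ᶠ t in 𝓝[>] (0:ℝ), t * ⟪a i, ξ⟫ < -α * gx i := by
    intro i
    rcases lt_or_eq_of_le (hgx i) with hlt | heq
    · have hpos : 0 < -α * gx i := by nlinarith
      have htend : Tendsto (fun t : ℝ => t * ⟪a i, ξ⟫) (𝓝[>] 0) (𝓝 0) := by
        have h1 : Tendsto (fun t : ℝ => t * ⟪a i, ξ⟫) (𝓝 0) (𝓝 (0 * ⟪a i, ξ⟫)) :=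
          (continuous_id.mul continuous_const).tendsto 0
        rw [zero_mul] at h1
        exact h1.mono_left nhdsWithin_le_nhds
      exact htend.eventually_lt_const hpos
    · filter_upwards [self_mem_nhdsWithin] with t ht
      have h1 : ⟪a i, ξ⟫ < 0 := hstrict i heq
      have h2 : (0:ℝ) < t := ht
      nlinarith
  have hall : ∀ᶠ t in 𝓝[>] (0:ℝ), ∀ i, t * ⟪a i, ξ⟫ < -α * gx i :=
    eventually_all.mpr hev
  obtain ⟨t, ht⟩ := (hall.and self_mem_nhdsWithin).exists
  refine ⟨t • ξ, fun i => ?_, fun j => ?_⟩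
  · rw [real_inner_smul_right]; exact ht.1 i
  · rw [real_inner_smul_right, horth j, mul_zero]

lemma exists_rightinv (hH : LinearIndependent ℝ H) :
    ∃ Rm : (Fin k → ℝ) → EuclideanSpace ℝ (Fin n),
      Continuous Rm ∧ (∀ z j, ⟪H j, Rm z⟫ = z j) ∧ Rm 0 = 0 := by
  classical
  -- biorthogonal family
  have hbi : ∀ j : Fin k, ∃ e : EuclideanSpace ℝ (Fin n),
      (∀ l, ⟪H l, e⟫ = if l = j then 1 else 0) := by
    intro j
    set W : Submodule ℝ (EuclideanSpace ℝ (Fin n)) :=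
      Submodule.span ℝ (H '' {j}ᶜ) with hW_def
    have hnot : H j ∉ W := hH.notMem_span_image (by simp)
    set z : EuclideanSpace ℝ (Fin n) := H j - (W.orthogonalProjectionOnto (H j) : EuclideanSpace ℝ (Fin n)) with hz_def
    have hzW : z ∈ Wᗮ := Submodule.sub_starProjection_mem_orthogonal (K := W) (H j)
    have hzne : z ≠ 0 := by
      intro h0
      apply hnot
      have : H j = (W.orthogonalProjectionOnto (H j) : EuclideanSpace ℝ (Fin n)) := by
        have := sub_eq_zero.mp (hz_def ▸ h0)
        exact this
      rw [this]; exact (W.orthogonalProjectionOnto (H j)).2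
    have hl0 : ∀ l, l ≠ j → ⟪H l, z⟫ = 0 := by
      intro l hlj
      have hmem : H l ∈ W := Submodule.subset_span ⟨l, by simp [hlj], rfl⟩
      exact (Submodule.mem_orthogonal W z).mp hzW (H l) hmem
    have hproj0 : ⟪(W.orthogonalProjectionOnto (H j) : EuclideanSpace ℝ (Fin n)), z⟫ = 0 :=
      (Submodule.mem_orthogonal W z).mp hzW _ (W.orthogonalProjectionOnto (H j)).2
    have hjz : ⟪H j, z⟫ = ‖z‖^2 := by
      have : ⟪H j, z⟫ = ⟪z, z⟫ + ⟪(W.orthogonalProjectionOnto (H j) : EuclideanSpace ℝ (Fin n)), z⟫ := by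
        rw [← inner_add_left]
        congr 1
        rw [hz_def]; abel
      rw [this, hproj0, add_zero, real_inner_self_eq_norm_sq]
    have hz2 : (0:ℝ) < ‖z‖^2 := pow_pos (norm_pos_iff.mpr hzne) 2
    refine ⟨(‖z‖^2)⁻¹ • z, fun l => ?_⟩
    rw [real_inner_smul_right]
    by_cases hlj : l = j
    · subst hlj; rw [hjz, if_pos rfl, inv_mul_cancel₀ (ne_of_gt hz2)]
    · rw [hl0 l hlj, mul_zero, if_neg hlj]
  choose e he using hbi
  refine ⟨fun z => ∑ j, z j • e j, ?_, ?_, by simp⟩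
  · exact continuous_finset_sum _ fun j _ => (continuous_apply j).smul continuous_const
  · intro z j
    rw [inner_sum]
    have : ∀ l, ⟪H j, z l • e l⟫ = if l = j then z j else 0 := by
      intro l
      rw [real_inner_smul_right, he l j]
      by_cases hlj : l = j
      · subst hlj; simp
      · rw [if_neg (fun h => hlj h.symm), mul_zero, if_neg hlj]
    rw [Finset.sum_congr rfl fun l _ => this l,
      Finset.sum_ite_eq' Finset.univ j (fun _ => z j)]
    simp

lemma inner_gradient {n : ℕ} (f : EuclideanSpace ℝ (Fin n) → ℝ) (x v : EuclideanSpace ℝ (Fin n)) :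
    ⟪gradient f x, v⟫ = fderiv ℝ f x v := by
  unfold gradient
  exact InnerProductSpace.toDual_symm_apply

end Aux

/-- Optimality conditions for the closed-loop dynamics: under MFCQ
on `C` there is an open set `X ⊇ C` on which the KKT system is solvable; and any
solution `(ξ, u, v)` of the KKT system satisfies `ξ = 𝒢_α(x)` (the projection of
`-F(x)` onto `T_C^(α)(x)`) and `(u, v)` minimizes `J(x,·,·)` over `K_{cbf,α}(x)`. -/
theorem statement7 {n m k : ℕ}
    (F : EuclideanSpace ℝ (Fin n) → EuclideanSpace ℝ (Fin n))
    (g : Fin m → EuclideanSpace ℝ (Fin n) → ℝ)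
    (H : Fin k → EuclideanSpace ℝ (Fin n)) (c : Fin k → ℝ)
    (hF : ContDiff ℝ 1 F) (hg : ∀ i, ContDiff ℝ 1 (g i))
    (hgconv : ∀ i, ConvexOn ℝ Set.univ (g i))
    (hmfcq : ∀ x ∈ constraintSet g H c, MFCQat g H x)
    (α : ℝ) (hα : 0 < α) :
    -- solvability of the KKT system on an open set containing `C`
    ((∃ X : Set (EuclideanSpace ℝ (Fin n)), IsOpen X ∧ constraintSet g H c ⊆ X ∧
        ∀ x ∈ X, ∃ (ξ : EuclideanSpace ℝ (Fin n)) (u : Fin m → ℝ) (v : Fin k → ℝ),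
          KKTproj F g H c α x ξ u v) ∧
    -- any KKT solution gives the projection and an optimal multiplier
      (∀ (x ξ : EuclideanSpace ℝ (Fin n)) (u : Fin m → ℝ) (v : Fin k → ℝ),
        KKTproj F g H c α x ξ u v →
          IsProjOn (Talpha g H c α x) (-F x) ξ ∧
          (u, v) ∈ Kcbf F g H c α x ∧
          ∀ p ∈ Kcbf F g H c α x, Jcost g H x (u, v) ≤ Jcost g H x p)) := by
  constructor
  · -- Part 1: existence of the open set X and solvability of the KKT system
    rcases Set.eq_empty_or_nonempty (constraintSet g H c) with hC | ⟨x₀, hx₀⟩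
    · exact ⟨∅, isOpen_empty, by rw [hC], fun x hx => absurd hx (Set.notMem_empty x)⟩
    have hH : LinearIndependent ℝ H := (hmfcq x₀ hx₀).1
    obtain ⟨Rm, hRmc, hRm, hRm0⟩ := exists_rightinv H hH
    set X : Set (EuclideanSpace ℝ (Fin n)) :=
      {x | ∃ ξ : EuclideanSpace ℝ (Fin n),
        (∀ i, ⟪gradient (g i) x, ξ⟫ < -α * g i x) ∧
        ∀ j, ⟪H j, ξ⟫ = -α * (⟪H j, x⟫ - c j)} with hX_def
    have hXopen : IsOpen X := by
      rw [isOpen_iff_mem_nhds]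
      rintro x₁ ⟨ξ₁, hξ1, hξ2⟩
      set corr : EuclideanSpace ℝ (Fin n) → (Fin k → ℝ) :=
        fun x => fun j => -α * (⟪H j, x⟫ - c j) - ⟪H j, ξ₁⟫ with hcorr_def
      set Ξ : EuclideanSpace ℝ (Fin n) → EuclideanSpace ℝ (Fin n) :=
        fun x => ξ₁ + Rm (corr x) with hΞ_def
      have hΞeq : ∀ x j, ⟪H j, Ξ x⟫ = -α * (⟪H j, x⟫ - c j) := by
        intro x j
        have h1 : ⟪H j, Ξ x⟫ = ⟪H j, ξ₁⟫ + corr x j := by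
          rw [hΞ_def]
          simp only
          rw [inner_add_right, hRm (corr x) j]
        rw [h1, hcorr_def]
        simp only
        ring
      have hΞx₁ : Ξ x₁ = ξ₁ := by
        have h0 : corr x₁ = 0 := by
          funext j
          rw [hcorr_def]
          simp only [Pi.zero_apply]
          rw [hξ2 j]
          ring
        rw [hΞ_def]
        simp only
        rw [h0, hRm0, add_zero]
      have hcorrc : Continuous corr := by
        rw [hcorr_def]
        exact continuous_pi fun j =>
          ((continuous_const.mul ((Continuous.inner continuous_const continuous_id).sub
            continuous_const)).sub continuous_const)
      have hΞc : Continuous Ξ := by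
        rw [hΞ_def]
        exact continuous_const.add (hRmc.comp hcorrc)
      set V : Set (EuclideanSpace ℝ (Fin n)) :=
        ⋂ i, {x | fderiv ℝ (g i) x (Ξ x) + α * g i x < 0} with hV_def
      have hVopen : IsOpen V := by
        rw [hV_def]
        refine isOpen_iInter_of_finite fun i => ?_
        have hc1 : Continuous fun x => fderiv ℝ (g i) x (Ξ x) + α * g i x :=
          (((hg i).continuous_fderiv one_ne_zero).clm_apply hΞc).add
            (continuous_const.mul (hg i).continuous)
        exact isOpen_lt hc1 continuous_const
      have hx₁V : x₁ ∈ V := by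
        rw [hV_def, Set.mem_iInter]
        intro i
        have h2 : fderiv ℝ (g i) x₁ (Ξ x₁) = ⟪gradient (g i) x₁, ξ₁⟫ := by
          rw [hΞx₁, inner_gradient]
        show fderiv ℝ (g i) x₁ (Ξ x₁) + α * g i x₁ < 0
        rw [h2]
        have := hξ1 i
        linarith
      have hVX : V ⊆ X := by
        intro x hx
        rw [hV_def, Set.mem_iInter] at hx
        refine ⟨Ξ x, fun i => ?_, fun j => hΞeq x j⟩
        have h3 := hx i
        rw [Set.mem_setOf_eq] at h3
        rw [inner_gradient]
        linarith
      exact Filter.mem_of_superset (hVopen.mem_nhds hx₁V) hVX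
    refine ⟨X, hXopen, ?_, ?_⟩
    · -- C ⊆ X
      intro x hx
      obtain ⟨_, ξ, hstrict, horth⟩ := hmfcq x hx
      obtain ⟨ξs, h1, h2⟩ := slater_scale (fun i => gradient (g i) x) H x
        (fun i => g i x) α hα hx.1 ξ hstrict horth
      refine ⟨ξs, h1, fun j => ?_⟩
      rw [h2 j, hx.2 j]
      ring
    · -- solvability of KKT on X
      rintro x ⟨ξs, hs1, hs2⟩
      obtain ⟨ξ, u, v, heq, hfa, hfH, hu, hc⟩ := kkt_exists (fun i => gradient (g i) x)
        (fun i => -α * g i x) H (fun j => -α * (⟪H j, x⟫ - c j)) (-F x) hH ξs hs1 hs2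
      refine ⟨ξ, u, v, ?_, fun i => by have := hfa i; linarith,
        fun j => by have := hfH j; linarith, hu, ?_⟩
      · have h2 : ξ + F x + (∑ i, u i • gradient (g i) x) + (∑ j, v j • H j)
            = (ξ + (∑ i, u i • gradient (g i) x) + (∑ j, v j • H j)) - (-F x) := by abel
        rw [h2, heq, sub_self]
      · refine Finset.sum_eq_zero fun i _ => ?_
        have h3 := hc i
        have h4 : ⟪gradient (g i) x, ξ⟫ + α * g i x
            = ⟪gradient (g i) x, ξ⟫ - (-α * g i x) := by ring
        rw [h4]
        exact h3
  · -- Part 2: every KKT solution is the projection with optimal multipliers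
    rintro x ξ u v ⟨hk1, hk2, hk3, hk4, hk5⟩
    have hproj : IsProjOn (Talpha g H c α x) (-F x) ξ :=
      part2' F g H c α x ξ u v hk1 hk2 hk3 hk4 hk5
    have hξeq : ξ = -F x - (∑ i, u i • gradient (g i) x) - (∑ j, v j • H j) := by
      have h2 : ξ - (-F x - (∑ i, u i • gradient (g i) x) - (∑ j, v j • H j)) =
          ξ + F x + (∑ i, u i • gradient (g i) x) + (∑ j, v j • H j) := by abel
      exact sub_eq_zero.mp (h2.trans hk1)
    have hFcl : Fcl F g H x u v = ξ := by
      simp only [Fcl]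
      exact hξeq.symm
    refine ⟨hproj, ⟨hk4, fun i => ?_, fun j => ?_⟩, ?_⟩
    · show ⟪gradient (g i) x, Fcl F g H x u v⟫ ≤ -α * g i x
      rw [hFcl]
      have := hk2 i
      linarith
    · show ⟪H j, Fcl F g H x u v⟫ = -α * (⟪H j, x⟫ - c j)
      rw [hFcl]
      have := hk3 j
      linarith
    · intro p hp
      have hz : Fcl F g H x p.1 p.2 ∈ Talpha g H c α x := ⟨hp.2.1, hp.2.2⟩
      have hle := hproj.2 _ hz
      have e1 : (∑ i, u i • gradient (g i) x) + (∑ j, v j • H j) = -F x - ξ := by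
        rw [hξeq]; abel
      have e2 : (∑ i, p.1 i • gradient (g i) x) + (∑ j, p.2 j • H j)
          = -F x - Fcl F g H x p.1 p.2 := by
        simp only [Fcl]; abel
      show (1/2) * ‖(∑ i, u i • gradient (g i) x) + ∑ j, v j • H j‖ ^ 2
        ≤ (1/2) * ‖(∑ i, p.1 i • gradient (g i) x) + ∑ j, p.2 j • H j‖ ^ 2
      rw [e1, e2, norm_sub_rev (-F x) ξ, norm_sub_rev (-F x) (Fcl F g H x p.1 p.2)]
      have hsq := pow_le_pow_left₀ (norm_nonneg _) hle 2
      linarith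

end
end

section
/- Assume MFCQ holds at every point of C, let x* ∈ SOL(F, C) with Lagrange multipliers (u*, v*) (i.e., (x*, u*, v*) satisfies the KKT conditions for VI(F, C)), and let Ṽ(x) = (1/2)‖x − x*‖². If F is μ-strongly monotone, then for every x in the open set X ⊇ C where the safe monotone flow is defined and every (u, v) ∈ Λ_α(x), the Dini derivative of Ṽ along 𝓖_α satisfies (x − x*)ᵀ𝓖_α(x) ≤ −μ‖x − x*‖² − (u − u*)ᵀ(g(x) − g(x*)) − (v − v*)ᵀh(x); if F is merely monotone, the same inequality holds with μ = 0. -/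
open scoped RealInnerProductSpace BigOperators Topology
open Set Filter

noncomputable section

/-- Gradient inequality for a convex differentiable function. -/
lemma grad_convex_le {n : ℕ} {f : EuclideanSpace ℝ (Fin n) → ℝ}
    (hf : ContDiff ℝ 1 f) (hconv : ConvexOn ℝ Set.univ f)
    (a b : EuclideanSpace ℝ (Fin n)) :
    ⟪gradient f a, b - a⟫ ≤ f b - f a := by
  set φ : ℝ → ℝ := f ∘ (AffineMap.lineMap a b : ℝ →ᵃ[ℝ] _) with hφ
  have hφconv : ConvexOn ℝ Set.univ φ := by
    simpa using hconv.comp_affineMap (AffineMap.lineMap a b : ℝ →ᵃ[ℝ] _)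
  have hd : HasDerivAt φ (⟪gradient f a, b - a⟫) 0 := by
    have h1 : HasDerivAt (AffineMap.lineMap a b : ℝ → EuclideanSpace ℝ (Fin n)) (b - a) 0 :=
      AffineMap.hasDerivAt_lineMap
    have h2 : HasFDerivAt f (fderiv ℝ f a) a :=
      ((hf.differentiable one_ne_zero) a).hasFDerivAt
    have h3 : HasDerivAt φ (fderiv ℝ f a (b - a)) 0 := by
      have h2' : HasFDerivAt f (fderiv ℝ f a) ((AffineMap.lineMap a b : ℝ →ᵃ[ℝ] _) (0:ℝ)) := by
        simpa [AffineMap.lineMap_apply] using h2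
      have := h2'.comp_hasDerivAt (x := (0:ℝ)) h1
      simpa [hφ, Function.comp] using this
    have h4 : (fderiv ℝ f a) (b - a) = ⟪gradient f a, b - a⟫ := by
      rw [gradient]
      exact (InnerProductSpace.toDual_symm_apply).symm
    rwa [h4] at h3
  have := hφconv.le_slope_of_hasDerivAt (Set.mem_univ (0:ℝ)) (Set.mem_univ (1:ℝ))
    one_pos hd
  simp only [slope, hφ, Function.comp, AffineMap.lineMap_apply] at this
  simpa using this

/-- Dini derivative of `Ṽ(x) = ½‖x − x*‖²` along the safe monotone
flow: for `x ∈ X` and `(u,v) ∈ Λ_α(x)`, if `F` is μ-strongly monotone then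
`(x−x*)ᵀ𝒢_α(x) ≤ −μ‖x−x*‖² − (u−u*)ᵀ(g(x)−g(x*)) − (v−v*)ᵀh(x)`, and if `F` is
merely monotone the same inequality holds with `μ = 0`. -/
theorem statement10 {n m k : ℕ}
    (F : EuclideanSpace ℝ (Fin n) → EuclideanSpace ℝ (Fin n))
    (g : Fin m → EuclideanSpace ℝ (Fin n) → ℝ)
    (H : Fin k → EuclideanSpace ℝ (Fin n)) (c : Fin k → ℝ)
    (hF : ContDiff ℝ 1 F) (hg : ∀ i, ContDiff ℝ 1 (g i))
    (hgconv : ∀ i, ConvexOn ℝ Set.univ (g i))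
    (hmfcq : ∀ x ∈ constraintSet g H c, MFCQat g H x)
    (α : ℝ) (hα : 0 < α)
    (X : Set (EuclideanSpace ℝ (Fin n))) (hX : IsOpen X)
    (hCX : constraintSet g H c ⊆ X)
    (𝒢 : EuclideanSpace ℝ (Fin n) → EuclideanSpace ℝ (Fin n))
    (h𝒢 : ∀ x ∈ X, IsProjOn (Talpha g H c α x) (-F x) (𝒢 x))
    -- `x*` solves `VI(F,C)` with Lagrange multipliers `(u*, v*)` (KKT conditions)
    (xs : EuclideanSpace ℝ (Fin n)) (hxs : xs ∈ SOL F (constraintSet g H c))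
    (us : Fin m → ℝ) (vs : Fin k → ℝ)
    (hKKT1 : F xs + (∑ i, us i • gradient (g i) xs) + (∑ j, vs j • H j) = 0)
    (hKKT2 : ∀ i, g i xs ≤ 0) (hKKT3 : ∀ j, ⟪H j, xs⟫ = c j)
    (hKKT4 : ∀ i, 0 ≤ us i) (hKKT5 : (∑ i, us i * g i xs) = 0)
    -- a point `x ∈ X` and `(u,v) ∈ Λ_α(x)`
    (x : EuclideanSpace ℝ (Fin n)) (hx : x ∈ X)
    (u : Fin m → ℝ) (v : Fin k → ℝ)
    (hu : ∀ i, 0 ≤ u i)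
    (hlag : 𝒢 x + F x + (∑ i, u i • gradient (g i) x) + (∑ j, v j • H j) = 0)
    (hcomp : (∑ i, u i * (⟪gradient (g i) x, 𝒢 x⟫ + α * g i x)) = 0) :
    -- μ-strongly monotone case
    ((∀ μ : ℝ, 0 < μ →
        (∀ x₁ x₂ : EuclideanSpace ℝ (Fin n),
          μ * ‖x₁ - x₂‖ ^ 2 ≤ ⟪x₁ - x₂, F x₁ - F x₂⟫) →
        ⟪x - xs, 𝒢 x⟫ ≤ -μ * ‖x - xs‖ ^ 2
          - (∑ i, (u i - us i) * (g i x - g i xs))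
          - (∑ j, (v j - vs j) * (⟪H j, x⟫ - c j))) ∧
    -- merely monotone case (μ = 0)
      ((∀ x₁ x₂ : EuclideanSpace ℝ (Fin n), 0 ≤ ⟪x₁ - x₂, F x₁ - F x₂⟫) →
        ⟪x - xs, 𝒢 x⟫ ≤
          - (∑ i, (u i - us i) * (g i x - g i xs))
          - (∑ j, (v j - vs j) * (⟪H j, x⟫ - c j)))) := by
  have main : ∀ μ : ℝ, 0 ≤ μ →
      (∀ x₁ x₂ : EuclideanSpace ℝ (Fin n),
        μ * ‖x₁ - x₂‖ ^ 2 ≤ ⟪x₁ - x₂, F x₁ - F x₂⟫) →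
      ⟪x - xs, 𝒢 x⟫ ≤ -μ * ‖x - xs‖ ^ 2
        - (∑ i, (u i - us i) * (g i x - g i xs))
        - (∑ j, (v j - vs j) * (⟪H j, x⟫ - c j)) := by
    intro μ hμ hmono
    have hE : ∀ j, ⟪H j, x - xs⟫ = ⟪H j, x⟫ - c j := fun j => by
      rw [inner_sub_right, hKKT3 j]
    have E1 : ⟪𝒢 x, x - xs⟫ + ⟪F x, x - xs⟫
        + (∑ i, u i * ⟪gradient (g i) x, x - xs⟫)
        + (∑ j, v j * (⟪H j, x⟫ - c j)) = 0 := by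
      have := congrArg (fun z : EuclideanSpace ℝ (Fin n) => ⟪z, x - xs⟫) hlag
      simp only [inner_add_left, sum_inner, real_inner_smul_left, hE,
        inner_zero_left] at this
      exact this
    have E2 : ⟪F xs, x - xs⟫
        + (∑ i, us i * ⟪gradient (g i) xs, x - xs⟫)
        + (∑ j, vs j * (⟪H j, x⟫ - c j)) = 0 := by
      have := congrArg (fun z : EuclideanSpace ℝ (Fin n) => ⟪z, x - xs⟫) hKKT1
      simp only [inner_add_left, sum_inner, real_inner_smul_left, hE,
        inner_zero_left] at this
      exact this
    have hmono' : μ * ‖x - xs‖ ^ 2 ≤ ⟪F x, x - xs⟫ - ⟪F xs, x - xs⟫ := by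
      have := hmono x xs
      rwa [real_inner_comm, inner_sub_left] at this
    have I2 : (∑ i, u i * (g i x - g i xs)) ≤ ∑ i, u i * ⟪gradient (g i) x, x - xs⟫ := by
      refine Finset.sum_le_sum fun i _ => mul_le_mul_of_nonneg_left ?_ (hu i)
      have h := grad_convex_le (hg i) (hgconv i) x xs
      rw [show xs - x = -(x - xs) by abel, inner_neg_right] at h
      linarith
    have I3 : (∑ i, us i * ⟪gradient (g i) xs, x - xs⟫) ≤ ∑ i, us i * (g i x - g i xs) := by
      refine Finset.sum_le_sum fun i _ => mul_le_mul_of_nonneg_left ?_ (hKKT4 i)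
      exact grad_convex_le (hg i) (hgconv i) xs x
    rw [real_inner_comm]
    simp only [sub_mul, Finset.sum_sub_distrib]
    linarith
  refine ⟨fun μ hμ hmono => main μ hμ.le hmono, fun hmono => ?_⟩
  have := main 0 le_rfl (fun x₁ x₂ => by simpa using hmono x₁ x₂)
  simpa using this

end
end

section
/- Let δ_ε(x) = (1/ε)Σ_{i=1}^m [g_i(x)]₊ + (1/ε)Σ_{j=1}^k |h_j(x)| for ε > 0. Then for every x in the open set X where the safe monotone flow is defined, δ_ε is directionally differentiable at x along every direction ξ ∈ ℝⁿ, and the Dini derivative of δ_ε along the safe monotone flow satisfies D⁺δ_ε(x) ≤ −(α/ε) Σ_{i ∈ I₊(x)} g_i(x) − (α/ε) Σ_{j ∈ I_h(x)} |h_j(x)|, where I₊(x) = {i : g_i(x) > 0} and I_h(x) = {j : h_j(x) ≠ 0}. -/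
open scoped RealInnerProductSpace BigOperators Topology
open Set Filter

noncomputable section

/-- The `ℓ¹` penalty function `δ_ε(x) = (1/ε)Σᵢ[gᵢ(x)]₊ + (1/ε)Σⱼ|hⱼ(x)|`. -/
def deltaPen {n m k : ℕ} (g : Fin m → EuclideanSpace ℝ (Fin n) → ℝ)
    (H : Fin k → EuclideanSpace ℝ (Fin n)) (c : Fin k → ℝ) (ε : ℝ)
    (x : EuclideanSpace ℝ (Fin n)) : ℝ :=
  (1/ε) * (∑ i, max (g i x) 0) + (1/ε) * (∑ j, |⟪H j, x⟫ - c j|)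

lemma slope_right {φ : ℝ → ℝ} {d : ℝ} (hφ : HasDerivAt φ d 0) :
    Tendsto (fun h : ℝ => (φ h - φ 0) / h) (𝓝[>] (0:ℝ)) (𝓝 d) := by
  have h1 := hasDerivAt_iff_tendsto_slope.mp hφ
  have h2 := h1.mono_left (nhdsWithin_mono 0 (fun y hy => ne_of_gt hy : Ioi (0:ℝ) ⊆ {0}ᶜ))
  refine h2.congr fun h => ?_
  simp [slope_def_field]

lemma dini_abs {φ : ℝ → ℝ} {d : ℝ} (hφ : HasDerivAt φ d 0) :
    Tendsto (fun h : ℝ => (|φ h| - |φ 0|) / h) (𝓝[>] (0:ℝ))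
      (𝓝 (if 0 < φ 0 then d else if φ 0 < 0 then -d else |d|)) := by
  have hs := slope_right hφ
  rcases lt_trichotomy (φ 0) 0 with hneg | hzero | hpos
  · rw [if_neg (by linarith), if_pos hneg]
    have hev : ∀ᶠ h in 𝓝[>] (0:ℝ), φ h < 0 :=
      eventually_nhdsWithin_of_eventually_nhds (hφ.continuousAt (Iio_mem_nhds hneg))
    refine (hs.neg.congr' ?_)
    filter_upwards [hev] with h hh
    rw [abs_of_neg hh, abs_of_neg hneg]
    ring
  · rw [if_neg (by simp [hzero]), if_neg (by simp [hzero])]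
    have habs : Tendsto (fun h : ℝ => |(φ h - φ 0) / h|) (𝓝[>] (0:ℝ)) (𝓝 |d|) :=
      hs.abs
    refine habs.congr' ?_
    filter_upwards [self_mem_nhdsWithin] with h (hh : 0 < h)
    rw [abs_div, abs_of_pos hh, hzero, abs_zero, sub_zero, sub_zero]
  · rw [if_pos hpos]
    have hev : ∀ᶠ h in 𝓝[>] (0:ℝ), 0 < φ h :=
      eventually_nhdsWithin_of_eventually_nhds (hφ.continuousAt (Ioi_mem_nhds hpos))
    refine hs.congr' ?_
    filter_upwards [hev] with h hh
    rw [abs_of_pos hh, abs_of_pos hpos]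

lemma max_half (a : ℝ) : max a 0 = (a + |a|) / 2 := by
  rcases le_total a 0 with h | h
  · rw [max_eq_right h, abs_of_nonpos h]; ring
  · rw [max_eq_left h, abs_of_nonneg h]; ring

lemma dini_max {φ : ℝ → ℝ} {d : ℝ} (hφ : HasDerivAt φ d 0) :
    Tendsto (fun h : ℝ => (max (φ h) 0 - max (φ 0) 0) / h) (𝓝[>] (0:ℝ))
      (𝓝 (if 0 < φ 0 then d else if φ 0 < 0 then 0 else max d 0)) := by
  have ha := dini_abs hφ
  have hs := slope_right hφ
  have hsum := (hs.add ha).div_const 2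
  have hval : (d + (if 0 < φ 0 then d else if φ 0 < 0 then -d else |d|)) / 2
      = (if 0 < φ 0 then d else if φ 0 < 0 then 0 else max d 0) := by
    split_ifs with h1 h2 <;> (try rw [max_half]) <;> ring
  rw [← hval]
  refine hsum.congr fun h => ?_
  rw [max_half, max_half]
  ring

lemma inner_gradient_eq {E : Type*} [NormedAddCommGroup E] [InnerProductSpace ℝ E]
    [CompleteSpace E] (f : E → ℝ) (x ξ : E) : ⟪gradient f x, ξ⟫ = fderiv ℝ f x ξ := by
  simp [gradient, InnerProductSpace.toDual_symm_apply]

lemma curve_g_deriv {n : ℕ} {f : EuclideanSpace ℝ (Fin n) → ℝ} (hf : ContDiff ℝ 1 f)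
    (x ξ : EuclideanSpace ℝ (Fin n)) :
    HasDerivAt (fun h : ℝ => f (x + h • ξ)) ⟪gradient f x, ξ⟫ 0 := by
  have hline : HasDerivAt (fun h : ℝ => x + h • ξ) ξ 0 := by
    simpa using ((hasDerivAt_id (0:ℝ)).smul_const ξ).const_add x
  have hfd : HasFDerivAt f (fderiv ℝ f x) (x + (0:ℝ) • ξ) := by
    rw [show x + (0:ℝ) • ξ = x by simp]
    exact (hf.differentiable one_ne_zero x).hasFDerivAt
  have hcomp := hfd.comp_hasDerivAt 0 hline
  rw [inner_gradient_eq]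
  exact hcomp

lemma curve_h_deriv {n : ℕ} (v x ξ : EuclideanSpace ℝ (Fin n)) (cj : ℝ) :
    HasDerivAt (fun h : ℝ => ⟪v, x + h • ξ⟫ - cj) ⟪v, ξ⟫ 0 := by
  have hfun : (fun h : ℝ => ⟪v, x + h • ξ⟫ - cj)
      = fun h : ℝ => (⟪v, x⟫ - cj) + h * ⟪v, ξ⟫ := by
    funext h
    rw [inner_add_right, real_inner_smul_right]; ring
  rw [hfun]
  simpa using ((hasDerivAt_id (0:ℝ)).mul_const (⟪v, ξ⟫ : ℝ)).const_add (⟪v, x⟫ - cj)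


lemma deltaPen_master {n m k : ℕ} (g : Fin m → EuclideanSpace ℝ (Fin n) → ℝ)
    (H : Fin k → EuclideanSpace ℝ (Fin n)) (c : Fin k → ℝ) (ε : ℝ)
    (hg : ∀ i, ContDiff ℝ 1 (g i)) (x ξ : EuclideanSpace ℝ (Fin n)) :
    Tendsto (fun h : ℝ => (deltaPen g H c ε (x + h • ξ) - deltaPen g H c ε x) / h)
      (𝓝[>] (0:ℝ))
      (𝓝 ((1/ε) * ∑ i, (if 0 < g i x then ⟪gradient (g i) x, ξ⟫
              else if g i x < 0 then 0 else max ⟪gradient (g i) x, ξ⟫ 0)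
        + (1/ε) * ∑ j, (if 0 < ⟪H j, x⟫ - c j then ⟪H j, ξ⟫
              else if ⟪H j, x⟫ - c j < 0 then -⟪H j, ξ⟫ else |⟪H j, ξ⟫|))) := by
  have hgt : ∀ i, Tendsto (fun h : ℝ => (max (g i (x + h • ξ)) 0 - max (g i x) 0) / h)
      (𝓝[>] (0:ℝ))
      (𝓝 (if 0 < g i x then ⟪gradient (g i) x, ξ⟫
          else if g i x < 0 then 0 else max ⟪gradient (g i) x, ξ⟫ 0)) := by
    intro i
    have := dini_max (curve_g_deriv (hg i) x ξ)
    simpa using this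
  have hht : ∀ j, Tendsto (fun h : ℝ =>
        (|⟪H j, x + h • ξ⟫ - c j| - |⟪H j, x⟫ - c j|) / h) (𝓝[>] (0:ℝ))
      (𝓝 (if 0 < ⟪H j, x⟫ - c j then ⟪H j, ξ⟫
          else if ⟪H j, x⟫ - c j < 0 then -⟪H j, ξ⟫ else |⟪H j, ξ⟫|)) := by
    intro j
    have := dini_abs (curve_h_deriv (H j) x ξ (c j))
    simpa using this
  have hsum := ((tendsto_finset_sum Finset.univ fun i _ => hgt i).const_mul (1/ε)).add
    ((tendsto_finset_sum Finset.univ fun j _ => hht j).const_mul (1/ε))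
  refine hsum.congr fun h => ?_
  simp only [deltaPen]
  rw [← Finset.sum_div, ← Finset.sum_div, Finset.sum_sub_distrib, Finset.sum_sub_distrib]
  ring

/-- Dini derivative of the penalty function `δ_ε`: `δ_ε` is
directionally differentiable on `X` in every direction, and its Dini derivative along
the safe monotone flow satisfies
`D⁺δ_ε(x) ≤ −(α/ε)Σ_{i ∈ I₊(x)} gᵢ(x) − (α/ε)Σ_{j ∈ I_h(x)} |hⱼ(x)|`. -/
theorem statement12 {n m k : ℕ}
    (F : EuclideanSpace ℝ (Fin n) → EuclideanSpace ℝ (Fin n))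
    (g : Fin m → EuclideanSpace ℝ (Fin n) → ℝ)
    (H : Fin k → EuclideanSpace ℝ (Fin n)) (c : Fin k → ℝ)
    (hF : ContDiff ℝ 1 F) (hg : ∀ i, ContDiff ℝ 1 (g i))
    (hgconv : ∀ i, ConvexOn ℝ Set.univ (g i))
    (α : ℝ) (hα : 0 < α) (ε : ℝ) (hε : 0 < ε)
    (X : Set (EuclideanSpace ℝ (Fin n))) (hX : IsOpen X)
    (hCX : constraintSet g H c ⊆ X)
    (𝒢 : EuclideanSpace ℝ (Fin n) → EuclideanSpace ℝ (Fin n))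
    -- the safe monotone flow field lies in the α-restricted tangent set
    (h𝒢 : ∀ x ∈ X, 𝒢 x ∈ Talpha g H c α x) :
    -- directional differentiability of `δ_ε` in every direction
    ((∀ x ∈ X, ∀ ξ : EuclideanSpace ℝ (Fin n), ∃ L : ℝ,
        Tendsto (fun h : ℝ => (deltaPen g H c ε (x + h • ξ) - deltaPen g H c ε x) / h)
          (nhdsWithin 0 (Set.Ioi 0)) (nhds L)) ∧
    -- the Dini derivative along the flow satisfies the claimed bound
      (∀ x ∈ X, ∃ L : ℝ,
        Tendsto (fun h : ℝ =>
            (deltaPen g H c ε (x + h • 𝒢 x) - deltaPen g H c ε x) / h)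
          (nhdsWithin 0 (Set.Ioi 0)) (nhds L) ∧
        L ≤ -(α/ε) * (∑ i, if 0 < g i x then g i x else 0)
            - (α/ε) * (∑ j, if ⟪H j, x⟫ - c j ≠ 0 then |⟪H j, x⟫ - c j| else 0))) := by
  constructor
  · intro x hx ξ
    exact ⟨_, deltaPen_master g H c ε hg x ξ⟩
  · intro x hx
    refine ⟨_, deltaPen_master g H c ε hg x (𝒢 x), ?_⟩
    obtain ⟨hgc, hhc⟩ := h𝒢 x hx
    have hb1 : ∀ i, (if 0 < g i x then ⟪gradient (g i) x, 𝒢 x⟫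
          else if g i x < 0 then 0 else max ⟪gradient (g i) x, 𝒢 x⟫ 0)
        ≤ -α * (if 0 < g i x then g i x else 0) := by
      intro i
      have hi := hgc i
      split_ifs with h1 h2
      · linarith [hi]
      · simp
      · have hz : g i x = 0 := le_antisymm (not_lt.mp h1) (not_lt.mp h2)
        have hle : ⟪gradient (g i) x, 𝒢 x⟫ ≤ 0 := by
          rw [hz] at hi; simpa using hi
        simpa using max_le hle le_rfl
    have hb2 : ∀ j, (if 0 < ⟪H j, x⟫ - c j then ⟪H j, 𝒢 x⟫
          else if ⟪H j, x⟫ - c j < 0 then -⟪H j, 𝒢 x⟫ else |⟪H j, 𝒢 x⟫|)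
        ≤ -α * (if ⟪H j, x⟫ - c j ≠ 0 then |⟪H j, x⟫ - c j| else 0) := by
      intro j
      have hj := hhc j
      rcases lt_trichotomy (⟪H j, x⟫ - c j) 0 with hlt | heq | hgt
      · rw [if_neg (not_lt.mpr hlt.le), if_pos hlt, if_pos (ne_of_lt hlt), hj,
          abs_of_neg hlt]
        exact le_of_eq (by ring)
      · rw [if_neg (by rw [heq]; exact lt_irrefl 0), if_neg (by rw [heq]; exact lt_irrefl 0),
          if_neg (not_not.mpr heq), hj, heq]
        simp
      · rw [if_pos hgt, if_pos (ne_of_gt hgt), hj, abs_of_pos hgt]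
    have hS1 := Finset.sum_le_sum (s := Finset.univ) (fun i _ => hb1 i)
    have hS2 := Finset.sum_le_sum (s := Finset.univ) (fun j _ => hb2 j)
    have hεnn : (0:ℝ) ≤ 1/ε := by positivity
    have h1 := mul_le_mul_of_nonneg_left hS1 hεnn
    have h2 := mul_le_mul_of_nonneg_left hS2 hεnn
    calc (1/ε) * ∑ i, (if 0 < g i x then ⟪gradient (g i) x, 𝒢 x⟫
              else if g i x < 0 then 0 else max ⟪gradient (g i) x, 𝒢 x⟫ 0)
        + (1/ε) * ∑ j, (if 0 < ⟪H j, x⟫ - c j then ⟪H j, 𝒢 x⟫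
              else if ⟪H j, x⟫ - c j < 0 then -⟪H j, 𝒢 x⟫ else |⟪H j, 𝒢 x⟫|)
        ≤ (1/ε) * ∑ i, -α * (if 0 < g i x then g i x else 0)
          + (1/ε) * ∑ j, -α * (if ⟪H j, x⟫ - c j ≠ 0 then |⟪H j, x⟫ - c j| else 0) :=
          add_le_add h1 h2
      _ = -(α/ε) * (∑ i, if 0 < g i x then g i x else 0)
          - (α/ε) * (∑ j, if ⟪H j, x⟫ - c j ≠ 0 then |⟪H j, x⟫ - c j| else 0) := by
          rw [← Finset.mul_sum, ← Finset.mul_sum]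
          ring

end
end

section
/- For x ∈ ℝⁿ, consider minimizing over (u, v) ∈ ℝ^m_{≥0} × ℝ^k the function (1/2)‖Σ_{i=1}^m u_i ∇g_i(x) + Σ_{j=1}^k v_j ∇h_j(x)‖² + uᵀ((∂g(x)/∂x)F(x) − α g(x)) + vᵀ((∂h(x)/∂x)F(x) − α h(x)). If (u, v) is a solution of this problem, then (u, v) is a minimizer of J(x, u, v) = (1/2)‖Σ_i u_i ∇g_i(x) + Σ_j v_j ∇h_j(x)‖² over the set K_{cbf,α}(x); in particular (u, v) ∈ K_{cbf,α}(x). -/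
open scoped RealInnerProductSpace BigOperators Topology
open Set Filter

noncomputable section

private lemma quad_aux {s q : ℝ} (hq : 0 ≤ q) (hs : s ≠ 0) :
    (-s / (q + s ^ 2 + 1)) * s + (-s / (q + s ^ 2 + 1)) ^ 2 * q < 0 := by
  have hD : 0 < q + s ^ 2 + 1 := by positivity
  have hs2 : 0 < s ^ 2 := by positivity
  have key : (-s / (q + s ^ 2 + 1)) * s + (-s / (q + s ^ 2 + 1)) ^ 2 * q
      = (s ^ 2 * (q - (q + s ^ 2 + 1))) / (q + s ^ 2 + 1) ^ 2 := by
    field_simp; ring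
  rw [key]
  apply div_neg_of_neg_of_pos
  · nlinarith
  · positivity

private lemma key_quad {s q : ℝ} (hq : 0 ≤ q)
    (h : ∀ t : ℝ, -1 < t → 0 ≤ t * s + t ^ 2 * q) : s = 0 := by
  by_contra hs
  have hD : 0 < q + s ^ 2 + 1 := by positivity
  have hlt : -1 < -s / (q + s ^ 2 + 1) := by
    have h1 : s < q + s ^ 2 + 1 := by nlinarith [sq_nonneg (s - 1)]
    have h2 : s / (q + s ^ 2 + 1) < 1 := (div_lt_one hD).mpr h1
    rw [neg_div]; linarith
  exact absurd (h _ hlt) (not_le.mpr (quad_aux hq hs))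

private lemma key_quad_nonneg {s q : ℝ} (hq : 0 ≤ q)
    (h : ∀ t : ℝ, 0 ≤ t → 0 ≤ t * s + t ^ 2 * q) : 0 ≤ s := by
  by_contra hs
  push_neg at hs
  have hD : 0 < q + s ^ 2 + 1 := by positivity
  have ht : (0:ℝ) ≤ -s / (q + s ^ 2 + 1) := div_nonneg (by linarith) hD.le
  exact absurd (h _ ht) (not_le.mpr (quad_aux hq hs.ne))

private lemma sum_update_smul_s15 {k : ℕ} {E : Type*} [AddCommMonoid E] [Module ℝ E]
    (v : Fin k → ℝ) (b : Fin k → E) (j₀ : Fin k) (t : ℝ) :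
    ∑ j, (v j + if j = j₀ then t else 0) • b j = (∑ j, v j • b j) + t • b j₀ := by
  simp [add_smul, Finset.sum_add_distrib, ite_smul, Finset.sum_ite_eq']

private lemma sum_update_mul {k : ℕ} (v : Fin k → ℝ) (d : Fin k → ℝ) (j₀ : Fin k) (t : ℝ) :
    ∑ j, (v j + if j = j₀ then t else 0) * d j = (∑ j, v j * d j) + t * d j₀ := by
  simp [add_mul, Finset.sum_add_distrib, ite_mul, Finset.sum_ite_eq']

private lemma sum_scale_smul {k : ℕ} {E : Type*} [AddCommMonoid E] [Module ℝ E]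
    (r : ℝ) (v : Fin k → ℝ) (b : Fin k → E) :
    ∑ j, (r * v j) • b j = r • ∑ j, v j • b j := by
  rw [Finset.smul_sum]; exact Finset.sum_congr rfl fun j _ => mul_smul r (v j) (b j)

private lemma sum_scale_mul {k : ℕ} (r : ℝ) (v : Fin k → ℝ) (d : Fin k → ℝ) :
    ∑ j, (r * v j) * d j = r * ∑ j, v j * d j := by
  rw [Finset.mul_sum]; exact Finset.sum_congr rfl fun j _ => mul_assoc r (v j) (d j)

private lemma abstract_opt {m k : ℕ} {E : Type*} [NormedAddCommGroup E] [InnerProductSpace ℝ E]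
    (a : Fin m → E) (b : Fin k → E) (cc : Fin m → ℝ) (dd : Fin k → ℝ)
    (u : Fin m → ℝ) (v : Fin k → ℝ) (hu : ∀ i, 0 ≤ u i)
    (hmin : ∀ (u' : Fin m → ℝ) (v' : Fin k → ℝ), (∀ i, 0 ≤ u' i) →
      (1/2) * ‖(∑ i, u i • a i) + ∑ j, v j • b j‖ ^ 2
          + (∑ i, u i * cc i) + (∑ j, v j * dd j) ≤
        (1/2) * ‖(∑ i, u' i • a i) + ∑ j, v' j • b j‖ ^ 2
          + (∑ i, u' i * cc i) + (∑ j, v' j * dd j)) :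
    (∀ i, 0 ≤ ⟪a i, (∑ i, u i • a i) + ∑ j, v j • b j⟫ + cc i) ∧
    (∀ j₀, ⟪b j₀, (∑ i, u i • a i) + ∑ j, v j • b j⟫ + dd j₀ = 0) ∧
    (∀ (u' : Fin m → ℝ) (v' : Fin k → ℝ), (∀ i, 0 ≤ u' i) →
      (∀ i, -cc i ≤ ⟪a i, (∑ i, u' i • a i) + ∑ j, v' j • b j⟫) →
      (∀ j, ⟪b j, (∑ i, u' i • a i) + ∑ j, v' j • b j⟫ = -dd j) →
      (1/2) * ‖(∑ i, u i • a i) + ∑ j, v j • b j‖ ^ 2 ≤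
        (1/2) * ‖(∑ i, u' i • a i) + ∑ j, v' j • b j‖ ^ 2) := by
  set G := (∑ i, u i • a i) + ∑ j, v j • b j with hG
  have hnorm : ∀ (w : E) (t : ℝ), ‖G + t • w‖ ^ 2
      = ‖G‖ ^ 2 + 2 * (t * ⟪G, w⟫) + t ^ 2 * ‖w‖ ^ 2 := by
    intro w t
    rw [norm_add_sq_real G (t • w), real_inner_smul_right, norm_smul]
    simp [Real.norm_eq_abs, mul_pow, sq_abs]
  -- equality multipliers
  have fact1 : ∀ j₀, ⟪b j₀, G⟫ + dd j₀ = 0 := by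
    intro j₀
    apply key_quad (q := (1/2) * ‖b j₀‖ ^ 2) (by positivity)
    intro t _
    have h := hmin u (fun j => v j + if j = j₀ then t else 0) hu
    rw [sum_update_smul_s15, sum_update_mul] at h
    have e : (∑ i, u i • a i) + ((∑ j, v j • b j) + t • b j₀) = G + t • b j₀ := by
      rw [hG, add_assoc]
    rw [e, hnorm] at h
    have hc := real_inner_comm G (b j₀)
    nlinarith [h]
  have fact2 : ∀ i₀, 0 ≤ ⟪a i₀, G⟫ + cc i₀ := by
    intro i₀
    apply key_quad_nonneg (q := (1/2) * ‖a i₀‖ ^ 2) (by positivity)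
    intro t ht
    have h := hmin (fun i => u i + if i = i₀ then t else 0) v
      (by intro i; split
          · exact add_nonneg (hu i) ht
          · simpa using hu i)
    rw [sum_update_smul_s15, sum_update_mul] at h
    have e : ((∑ i, u i • a i) + t • a i₀) + ∑ j, v j • b j = G + t • a i₀ := by
      rw [hG, add_right_comm]
    rw [e, hnorm] at h
    have hc := real_inner_comm G (a i₀)
    nlinarith [h]
  have fact3 : ‖G‖ ^ 2 + (∑ i, u i * cc i) + (∑ j, v j * dd j) = 0 := by
    apply key_quad (q := (1/2) * ‖G‖ ^ 2) (by positivity)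
    intro t ht
    have h := hmin (fun i => (1 + t) * u i) (fun j => (1 + t) * v j)
      (fun i => mul_nonneg (by linarith) (hu i))
    rw [sum_scale_smul, sum_scale_smul, sum_scale_mul, sum_scale_mul] at h
    have e : (1 + t) • (∑ i, u i • a i) + (1 + t) • (∑ j, v j • b j) = (1 + t) • G := by
      rw [hG, smul_add]
    rw [e] at h
    have hn : ‖(1 + t) • G‖ ^ 2 = (1 + t) ^ 2 * ‖G‖ ^ 2 := by
      rw [norm_smul]; simp [Real.norm_eq_abs, mul_pow, sq_abs]
    rw [hn] at h
    nlinarith [h]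
  refine ⟨fact2, fact1, ?_⟩
  intro u' v' hu' hA hB
  set G' := (∑ i, u' i • a i) + ∑ j, v' j • b j with hG'
  have expand : ⟪G, G'⟫ = (∑ i, u i * ⟪a i, G'⟫) + ∑ j, v j * ⟪b j, G'⟫ := by
    rw [hG, inner_add_left, sum_inner, sum_inner]
    simp [real_inner_smul_left]
  have hineq : ‖G‖ ^ 2 ≤ ⟪G, G'⟫ := by
    rw [expand]
    have h1 : ∑ i, u i * (-cc i) ≤ ∑ i, u i * ⟪a i, G'⟫ :=
      Finset.sum_le_sum fun i _ => mul_le_mul_of_nonneg_left (hA i) (hu i)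
    have h2 : ∑ j, v j * ⟪b j, G'⟫ = ∑ j, v j * (-dd j) :=
      Finset.sum_congr rfl fun j _ => by rw [hB j]
    have h3 : ∑ i, u i * (-cc i) = -∑ i, u i * cc i := by simp [mul_neg]
    have h4 : ∑ j, v j * (-dd j) = -∑ j, v j * dd j := by simp [mul_neg]
    rw [h2, h4]; rw [h3] at h1
    linarith
  nlinarith [sq_nonneg (‖G' - G‖), norm_sub_sq_real G' G, real_inner_comm G G']

/-- Alternative characterization of the safe feedback: any
minimizer of the "dual" objective over `ℝ^m_{≥0} × ℝ^k` is a minimizer of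
`J(x,·,·)` over `K_{cbf,α}(x)`; in particular it belongs to `K_{cbf,α}(x)`. -/
theorem statement15 {n m k : ℕ}
    (F : EuclideanSpace ℝ (Fin n) → EuclideanSpace ℝ (Fin n))
    (g : Fin m → EuclideanSpace ℝ (Fin n) → ℝ)
    (H : Fin k → EuclideanSpace ℝ (Fin n)) (c : Fin k → ℝ)
    (hF : ContDiff ℝ 1 F) (hg : ∀ i, ContDiff ℝ 1 (g i))
    (hgconv : ∀ i, ConvexOn ℝ Set.univ (g i))
    (α : ℝ) (hα : 0 < α)
    (x : EuclideanSpace ℝ (Fin n))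
    (u : Fin m → ℝ) (v : Fin k → ℝ)
    (hu : ∀ i, 0 ≤ u i)
    -- `(u,v)` minimizes the dual objective over `ℝ^m_{≥0} × ℝ^k`
    (hmin : ∀ (u' : Fin m → ℝ) (v' : Fin k → ℝ), (∀ i, 0 ≤ u' i) →
      Jcost g H x (u, v)
          + (∑ i, u i * (⟪gradient (g i) x, F x⟫ - α * g i x))
          + (∑ j, v j * (⟪H j, F x⟫ - α * (⟪H j, x⟫ - c j))) ≤
        Jcost g H x (u', v')
          + (∑ i, u' i * (⟪gradient (g i) x, F x⟫ - α * g i x))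
          + (∑ j, v' j * (⟪H j, F x⟫ - α * (⟪H j, x⟫ - c j)))) :
    -- then `(u,v) ∈ K_{cbf,α}(x)` and it minimizes `J(x,·,·)` over `K_{cbf,α}(x)`
    ((u, v) ∈ Kcbf F g H c α x ∧
      ∀ p ∈ Kcbf F g H c α x, Jcost g H x (u, v) ≤ Jcost g H x p) := by
  obtain ⟨f2, f1, fmin⟩ := abstract_opt (fun i => gradient (g i) x) H
      (fun i => ⟪gradient (g i) x, F x⟫ - α * g i x)
      (fun j => ⟪H j, F x⟫ - α * (⟪H j, x⟫ - c j)) u v hu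
      (by intro u' v' h; simpa [Jcost] using hmin u' v' h)
  have innerFcl : ∀ (w : EuclideanSpace ℝ (Fin n)) (u' : Fin m → ℝ) (v' : Fin k → ℝ),
      ⟪w, Fcl F g H x u' v'⟫
        = -⟪w, F x⟫ - ⟪w, (∑ i, u' i • gradient (g i) x) + ∑ j, v' j • H j⟫ := by
    intro w u' v'
    simp only [Fcl, sub_eq_add_neg, inner_add_right, inner_neg_right]
    ring
  constructor
  · refine ⟨hu, fun i => ?_, fun j => ?_⟩
    · have h2 := f2 i
      rw [innerFcl]
      linarith
    · have h1 := f1 j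
      rw [innerFcl]
      linarith
  · rintro ⟨u', v'⟩ ⟨hp1, hp2, hp3⟩
    have hA : ∀ i, -(⟪gradient (g i) x, F x⟫ - α * g i x)
        ≤ ⟪gradient (g i) x, (∑ i, u' i • gradient (g i) x) + ∑ j, v' j • H j⟫ := by
      intro i
      have h2 := hp2 i
      rw [innerFcl] at h2
      linarith
    have hB : ∀ j, ⟪H j, (∑ i, u' i • gradient (g i) x) + ∑ j, v' j • H j⟫
        = -(⟪H j, F x⟫ - α * (⟪H j, x⟫ - c j)) := by
      intro j
      have h3 := hp3 j
      rw [innerFcl] at h3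
      linarith
    have := fmin u' v' hp1 hA hB
    simpa [Jcost] using this


end
end
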